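/- The vector ρ₂ := e_L + e_5 lies in Γ^∨, spans an extremal ray of Γ^∨, and satisfies ⟨K, ρ₂⟩ = −2; hence ρ₂ is a coextremal ray of M̄_{0,6}. (Geometrically, ρ₂ is the class of a fiber of a forgetful map M̄_{0,6} → M̄_{0,5}, which is a Mori fiber space.) -/
import Mathlib


noncomputable section

/-- Index in `Fin 16` of the exceptional class `E_{ab}` attached to a pair of points
(points written `0`-based as elements of `Fin 5`, assuming `a < b`):
`(0,1) ↦ 6, (0,2) ↦ 7, …, (3,4) ↦ 15`. -/
def pairIdx : ℕ → ℕ → Fin 16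
  | 0, 1 => 6
  | 0, 2 => 7
  | 0, 3 => 8
  | 0, 4 => 9
  | 1, 2 => 10
  | 1, 3 => 11
  | 1, 4 => 12
  | 2, 3 => 13
  | 2, 4 => 14
  | 3, 4 => 15
  | _, _ => 0

/-- The coordinate vector `e_L` (the class `L`). -/
def eL : Fin 16 → ℝ := Pi.single 0 1

/-- The coordinate vector `e_i` for the point `i ∈ {1,…,5}` (represented `0`-based
by `i : Fin 5`). -/
def eP (i : Fin 5) : Fin 16 → ℝ := Pi.single ⟨i.val + 1, by omega⟩ 1

/-- The coordinate vector `e_{ab}` for a 2-element subset `{a,b} ⊂ {1,…,5}`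
(represented `0`-based); symmetric in `a` and `b`. -/
def eE (a b : Fin 5) : Fin 16 → ℝ :=
  Pi.single (if a.val < b.val then pairIdx a.val b.val else pairIdx b.val a.val) 1

/-- The standard inner product on `ℝ¹⁶`. -/
def ip (x y : Fin 16 → ℝ) : ℝ := ∑ i, x i * y i

def Distinct3 (k l m : Fin 5) : Prop := k ≠ l ∧ k ≠ m ∧ l ≠ m

def Distinct5 (i j k l m : Fin 5) : Prop :=
  i ≠ j ∧ i ≠ k ∧ i ≠ l ∧ i ≠ m ∧ j ≠ k ∧ j ≠ l ∧ j ≠ m ∧ k ≠ l ∧ k ≠ m ∧ l ≠ m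

/-- The 40 classes: 25 boundary divisors and 15 fixed-point divisors `F_σ` of `M̄₀₆`. -/
def Gamma : Set (Fin 16 → ℝ) :=
  {v | (∃ i : Fin 5, v = eP i) ∨
       (∃ a b : Fin 5, a ≠ b ∧ v = eE a b) ∨
       (∃ k l m : Fin 5, Distinct3 k l m ∧
          v = eL - eP k - eP l - eP m - eE k l - eE k m - eE l m) ∨
       (∃ j a b c d : Fin 5, Distinct5 j a b c d ∧
          v = (2 : ℝ) • eL - (∑ i, eP i) - eE a c - eE a d - eE b c - eE b d)}

/-- The dual cone `Γ^∨ = {v : ⟨g,v⟩ ≥ 0 for all g ∈ Γ}`. -/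
def GammaDual : Set (Fin 16 → ℝ) := {v | ∀ gv ∈ Gamma, 0 ≤ ip gv v}
/-- The canonical class `K = -4e_L + 2(e_1 + ⋯ + e_5) + Σ_{{a,b}} e_{ab}` of `M̄₀₆`. -/
def Kcl : Fin 16 → ℝ :=
  -((4 : ℝ) • eL) + (2 : ℝ) • (∑ i, eP i) +
    ∑ a : Fin 5, ∑ b : Fin 5, if a < b then eE a b else 0

/-- A nonzero `ρ` spans an extremal ray of the convex cone `C` if `ρ ∈ C` and
whenever `v₁, v₂ ∈ C` with `v₁ + v₂ ∈ ℝ₊·ρ`, both `v₁` and `v₂` lie in `ℝ₊·ρ`. -/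
def SpansExtremalRay (C : Set (Fin 16 → ℝ)) (ρ : Fin 16 → ℝ) : Prop :=
  ρ ≠ 0 ∧ ρ ∈ C ∧ ∀ v₁ v₂, v₁ ∈ C → v₂ ∈ C →
    (∃ t : ℝ, 0 ≤ t ∧ v₁ + v₂ = t • ρ) →
    ((∃ t : ℝ, 0 ≤ t ∧ v₁ = t • ρ) ∧ (∃ t : ℝ, 0 ≤ t ∧ v₂ = t • ρ))
/-- `ρ₂ = e_L + e₅`. -/
def ρ₂ : Fin 16 → ℝ := eL + eP 4


lemma ip_single_left (j : Fin 16) (v : Fin 16 → ℝ) : ip (Pi.single j 1) v = v j := by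
  simp [ip, Pi.single_apply, Finset.sum_ite_eq]

lemma ip_single_right (j : Fin 16) (v : Fin 16 → ℝ) : ip v (Pi.single j 1) = v j := by
  simp [ip, Pi.single_apply, Finset.sum_ite_eq']

lemma ip_add_right (g x y : Fin 16 → ℝ) : ip g (x + y) = ip g x + ip g y := by
  simp [ip, mul_add, Finset.sum_add_distrib]

lemma ip_sub_left (x y v : Fin 16 → ℝ) : ip (x - y) v = ip x v - ip y v := by
  simp [ip, sub_mul, Finset.sum_sub_distrib]

lemma eP4 : eP 4 = Pi.single 5 1 := rfl

lemma ip_rho2 (g : Fin 16 → ℝ) : ip g ρ₂ = g 0 + g 5 := by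
  rw [ρ₂, ip_add_right, eL, eP4, ip_single_right, ip_single_right]

lemma eP5 (i : Fin 5) : eP i 5 = if i = 4 then 1 else 0 := by
  fin_cases i <;> simp (config := { decide := true }) [eP, Pi.single_apply]

lemma eP0 (i : Fin 5) : eP i 0 = 0 := by
  fin_cases i <;> simp (config := { decide := true }) [eP, Pi.single_apply]

lemma eE05 (a b : Fin 5) (h : a ≠ b) : eE a b 0 = 0 ∧ eE a b 5 = 0 := by
  fin_cases a <;> fin_cases b <;>
    simp_all (config := { decide := true }) [eE, pairIdx, Pi.single_apply]

lemma sumEP0 : (∑ i : Fin 5, eP i) 0 = 0 := by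
  simp [Finset.sum_apply, eP0]

lemma sumEP5 : (∑ i : Fin 5, eP i) 5 = 1 := by
  rw [Finset.sum_apply]
  rw [Fin.sum_univ_five]
  simp (config := { decide := true }) [eP5]

lemma eL0 : eL 0 = 1 := by simp [eL]

lemma eL5 : eL 5 = 0 := by
  simp (config := { decide := true }) [eL, Pi.single_apply]

lemma rho2_apply (j : Fin 16) :
    ρ₂ j = (if j = 0 then 1 else 0) + (if j = 5 then 1 else 0) := by
  simp [ρ₂, eL, eP4, Pi.single_apply]

lemma rho2_mem : ρ₂ ∈ GammaDual := by
  intro g hg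
  rw [ip_rho2]
  rcases hg with ⟨i, rfl⟩ | ⟨a, b, hab, rfl⟩ | ⟨k, l, m, ⟨hkl, hkm, hlm⟩, rfl⟩ |
    ⟨j, a, b, c, d, ⟨_, _, _, _, _, hac, had, hbc, hbd, _⟩, rfl⟩
  · rw [eP0, eP5]; split_ifs <;> norm_num
  · rw [(eE05 a b hab).1, (eE05 a b hab).2]; norm_num
  · simp only [Pi.sub_apply, eL0, eL5, eP0, eP5,
      (eE05 k l hkl).1, (eE05 k l hkl).2, (eE05 k m hkm).1, (eE05 k m hkm).2,
      (eE05 l m hlm).1, (eE05 l m hlm).2]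
    split_ifs <;> simp_all
  · simp only [Pi.sub_apply, Pi.smul_apply, smul_eq_mul, eL0, eL5, sumEP0, sumEP5,
      (eE05 a c hac).1, (eE05 a c hac).2, (eE05 a d had).1, (eE05 a d had).2,
      (eE05 b c hbc).1, (eE05 b c hbc).2, (eE05 b d hbd).1, (eE05 b d hbd).2]
    norm_num

lemma dual_nonneg {v : Fin 16 → ℝ} (hv : v ∈ GammaDual) :
    ∀ j : Fin 16, j ≠ 0 → 0 ≤ v j := by
  have hP : ∀ i : Fin 5, 0 ≤ v ⟨i.val + 1, by omega⟩ := fun i => by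
    simpa [eP, ip_single_left] using hv (eP i) (Or.inl ⟨i, rfl⟩)
  have hE : ∀ (a b : Fin 5), a ≠ b →
      0 ≤ v (if a.val < b.val then pairIdx a.val b.val else pairIdx b.val a.val) :=
    fun a b h => by
      simpa [eE, ip_single_left] using hv (eE a b) (Or.inr (Or.inl ⟨a, b, h, rfl⟩))
  intro j hj
  fin_cases j
  · exact absurd rfl hj
  · exact hP 0
  · exact hP 1
  · exact hP 2
  · exact hP 3
  · exact hP 4
  · exact hE 0 1 (by decide)
  · exact hE 0 2 (by decide)
  · exact hE 0 3 (by decide)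
  · exact hE 0 4 (by decide)
  · exact hE 1 2 (by decide)
  · exact hE 1 3 (by decide)
  · exact hE 1 4 (by decide)
  · exact hE 2 3 (by decide)
  · exact hE 2 4 (by decide)
  · exact hE 3 4 (by decide)

lemma dual_key {v : Fin 16 → ℝ} (hv : v ∈ GammaDual) :
    0 ≤ v 0 - v 3 - v 4 - v 5 - v 13 - v 14 - v 15 := by
  have hg : (eL - eP 2 - eP 3 - eP 4 - eE 2 3 - eE 2 4 - eE 3 4) ∈ Gamma :=
    Or.inr (Or.inr (Or.inl ⟨2, 3, 4, ⟨by decide, by decide, by decide⟩, rfl⟩))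
  have := hv _ hg
  rwa [ip_sub_left, ip_sub_left, ip_sub_left, ip_sub_left, ip_sub_left, ip_sub_left,
    show eL = Pi.single 0 1 from rfl, show eP 2 = Pi.single 3 1 from rfl,
    show eP 3 = Pi.single 4 1 from rfl, show eP 4 = Pi.single 5 1 from rfl,
    show eE 2 3 = Pi.single 13 1 from rfl, show eE 2 4 = Pi.single 14 1 from rfl,
    show eE 3 4 = Pi.single 15 1 from rfl,
    ip_single_left, ip_single_left, ip_single_left, ip_single_left, ip_single_left,
    ip_single_left, ip_single_left] at this

theorem rho2_coextremal :
    ρ₂ ∈ GammaDual ∧ SpansExtremalRay GammaDual ρ₂ ∧ ip Kcl ρ₂ = -2 := by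
  have hzero : ∀ (j : Fin 16), j ≠ 0 → j ≠ 5 → ρ₂ j = 0 := by
    intro j hj0 hj5
    rw [rho2_apply, if_neg hj0, if_neg hj5, add_zero]
  refine ⟨rho2_mem, ⟨?_, rho2_mem, ?_⟩, ?_⟩
  · intro h
    have := congrFun h 0
    rw [rho2_apply, if_pos rfl, if_neg (by decide : (0:Fin 16) ≠ 5)] at this
    norm_num at this
  · rintro v₁ v₂ h₁ h₂ ⟨t, ht, hsum⟩
    have hz : ∀ (j : Fin 16), j ≠ 0 → j ≠ 5 → v₁ j = 0 ∧ v₂ j = 0 := by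
      intro j hj0 hj5
      have h := congrFun hsum j
      rw [Pi.add_apply, Pi.smul_apply, hzero j hj0 hj5, smul_zero] at h
      have n1 := dual_nonneg h₁ j hj0
      have n2 := dual_nonneg h₂ j hj0
      constructor <;> linarith
    have h0 := congrFun hsum 0
    have h5 := congrFun hsum 5
    rw [Pi.add_apply, Pi.smul_apply, rho2_apply, smul_eq_mul,
      if_pos rfl, if_neg (by decide : (0:Fin 16) ≠ 5)] at h0
    rw [Pi.add_apply, Pi.smul_apply, rho2_apply, smul_eq_mul,
      if_neg (by decide : (5:Fin 16) ≠ 0), if_pos rfl] at h5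
    norm_num at h0 h5
    have k1 := dual_key h₁
    have k2 := dual_key h₂
    have z13 := (hz 3 (by decide) (by decide))
    have z14 := (hz 4 (by decide) (by decide))
    have z113 := (hz 13 (by decide) (by decide))
    have z114 := (hz 14 (by decide) (by decide))
    have z115 := (hz 15 (by decide) (by decide))
    rw [z13.1, z14.1, z113.1, z114.1, z115.1] at k1
    rw [z13.2, z14.2, z113.2, z114.2, z115.2] at k2
    have e1 : v₁ 0 = v₁ 5 := by linarith
    have e2 : v₂ 0 = v₂ 5 := by linarith
    have n15 := dual_nonneg h₁ 5 (by decide)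
    have n25 := dual_nonneg h₂ 5 (by decide)
    constructor
    · refine ⟨v₁ 5, n15, funext fun j => ?_⟩
      rw [Pi.smul_apply, rho2_apply, smul_eq_mul]
      rcases eq_or_ne j 0 with rfl | hj0
      · rw [if_pos rfl, if_neg (by decide : (0:Fin 16) ≠ 5)]; rw [e1]; ring
      rcases eq_or_ne j 5 with rfl | hj5
      · rw [if_neg hj0, if_pos rfl]; ring
      · rw [if_neg hj0, if_neg hj5, (hz j hj0 hj5).1]; ring
    · refine ⟨v₂ 5, n25, funext fun j => ?_⟩
      rw [Pi.smul_apply, rho2_apply, smul_eq_mul]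
      rcases eq_or_ne j 0 with rfl | hj0
      · rw [if_pos rfl, if_neg (by decide : (0:Fin 16) ≠ 5)]; rw [e2]; ring
      rcases eq_or_ne j 5 with rfl | hj5
      · rw [if_neg hj0, if_pos rfl]; ring
      · rw [if_neg hj0, if_neg hj5, (hz j hj0 hj5).2]; ring
  · have key : ∀ (j : Fin 16), (∀ a b : Fin 5, a ≠ b → eE a b j = 0) →
        (∑ a : Fin 5, ∑ b : Fin 5, if a < b then eE a b else 0) j = 0 := by
      intro j h
      rw [Finset.sum_apply]
      refine Finset.sum_eq_zero fun a _ => ?_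
      rw [Finset.sum_apply]
      refine Finset.sum_eq_zero fun b _ => ?_
      by_cases hab : a < b
      · simp [hab, h a b hab.ne]
      · simp [hab]
    rw [ip_rho2, Kcl]
    simp only [Pi.add_apply, Pi.neg_apply, Pi.smul_apply, smul_eq_mul, eL0, eL5,
      sumEP0, sumEP5,
      key 0 (fun a b h => (eE05 a b h).1), key 5 (fun a b h => (eE05 a b h).2)]
    norm_num
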